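/- Let m ≥ n and suppose there exists a nonsingular M ∈ R^{m×m} with σ_n(M A) > ‖M B‖₂. If the equation A x − B|x| = b has a solution, then the solution is unique. -/

import Mathlib

open Matrix

/-- The `i`-th largest singular value of a real matrix (0-indexed),
defined as the `i`-th entry of the decreasingly sorted list of square roots
of the eigenvalues of `Aᴴ * A`; `0` if `i` is out of range. -/
noncomputable def sv {m n : ℕ} (A : Matrix (Fin m) (Fin n) ℝ) (i : ℕ) : ℝ :=
  ((List.ofFn fun j : Fin n =>
      Real.sqrt ((Matrix.isHermitian_conjTranspose_mul_self A).eigenvalues j)).insertionSort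
    (· ≥ ·)).getD i 0

/-- Euclidean norm of a vector. -/
noncomputable def vnorm {n : ℕ} (x : Fin n → ℝ) : ℝ := Real.sqrt (∑ i, x i ^ 2)

/-! If `x` and `y` both solve `A x - B|x| = b`, then `d = y - x` and `u = |y| - |x|` satisfy
`(M A) d = (M B) u` with `|u| ≤ |d|` componentwise. Expanding `‖C v‖² = vᵀ (Cᵀ C) v` in an
orthonormal eigenbasis of `Cᵀ C` gives `σ_n(M A) ‖d‖ ≤ ‖M A d‖ = ‖M B u‖ ≤ ‖M B‖₂ ‖u‖ ≤ ‖M B‖₂ ‖d‖`,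
which forces `d = 0`. -/

namespace List

theorem getD_mem_or_eq_default {α : Type*} (l : List α) (i : ℕ) (d : α) :
    l.getD i d ∈ l ∨ l.getD i d = d := by
  rw [getD_eq_getElem?_getD]
  cases h : l[i]? with
  | none => exact Or.inr rfl
  | some a => exact Or.inl (mem_of_getElem? h)

variable {α : Type*} [LinearOrder α] {l : List α} {x : α}

theorem Pairwise.getD_length_sub_one_le (hl : l.Pairwise (· ≥ ·)) (hx : x ∈ l) (d : α) :
    l.getD (l.length - 1) d ≤ x := by
  have hne := ne_nil_of_mem hx
  rw [getD_eq_getElem _ _ (Nat.sub_one_lt (length_pos_iff.2 hne).ne'), ← getLast_eq_getElem hne]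
  exact hl.rel_getLast hx

theorem Pairwise.le_getD_zero (hl : l.Pairwise (· ≥ ·)) (hx : x ∈ l) (d : α) :
    x ≤ l.getD 0 d := by
  obtain ⟨a, t, rfl⟩ := exists_cons_of_ne_nil (ne_nil_of_mem hx)
  rcases mem_cons.1 hx with rfl | hxt
  · exact le_rfl
  · exact rel_of_pairwise_cons hl hxt

end List

namespace Matrix

variable {ι : Type*} [Fintype ι]

theorem dotProduct_mulVec_star (U : Matrix ι ι ℝ) (v w : ι → ℝ) :
    v ⬝ᵥ U *ᵥ w = (star U *ᵥ v) ⬝ᵥ w := by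
  rw [dotProduct_mulVec, star_eq_conjTranspose, conjTranspose_eq_transpose_of_trivial,
    mulVec_transpose]

theorem dotProduct_conjTranspose_mul_self_mulVec {m : Type*} [Fintype m] (A : Matrix m ι ℝ)
    (v : ι → ℝ) : v ⬝ᵥ (Aᴴ * A) *ᵥ v = (A *ᵥ v) ⬝ᵥ (A *ᵥ v) := by
  rw [← mulVec_mulVec, dotProduct_mulVec, conjTranspose_eq_transpose_of_trivial, vecMul_transpose]

variable [DecidableEq ι]

theorem dotProduct_self_eq_sum_sq_star_mulVec {U : Matrix ι ι ℝ} (hU : U ∈ unitaryGroup ι ℝ)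
    (v : ι → ℝ) : v ⬝ᵥ v = ∑ j, (star U *ᵥ v) j ^ 2 := by
  calc v ⬝ᵥ v = v ⬝ᵥ U *ᵥ (star U *ᵥ v) := by
        rw [mulVec_mulVec, mem_unitaryGroup_iff.1 hU, one_mulVec]
    _ = ∑ j, (star U *ᵥ v) j ^ 2 := by rw [dotProduct_mulVec_star]; simp only [dotProduct, sq]

namespace IsHermitian

variable {H : Matrix ι ι ℝ}

theorem dotProduct_mulVec_eq_sum (hH : H.IsHermitian) (v : ι → ℝ) :
    v ⬝ᵥ H *ᵥ v =
      ∑ j, hH.eigenvalues j * (star (hH.eigenvectorUnitary : Matrix ι ι ℝ) *ᵥ v) j ^ 2 := by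
  conv_lhs => rw [hH.spectral_theorem, Unitary.conjStarAlgAut_apply, ← mulVec_mulVec,
    ← mulVec_mulVec, dotProduct_mulVec_star]
  simp only [dotProduct, mulVec_diagonal, Function.comp_apply, RCLike.ofReal_real_eq_id, id]
  exact Finset.sum_congr rfl fun j _ => by ring

theorem mul_dotProduct_self_le_dotProduct_mulVec (hH : H.IsHermitian) {c : ℝ}
    (hc : ∀ j, c ≤ hH.eigenvalues j) (v : ι → ℝ) : c * (v ⬝ᵥ v) ≤ v ⬝ᵥ H *ᵥ v := by
  rw [hH.dotProduct_mulVec_eq_sum, dotProduct_self_eq_sum_sq_star_mulVec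
    hH.eigenvectorUnitary.2, Finset.mul_sum]
  exact Finset.sum_le_sum fun j _ => mul_le_mul_of_nonneg_right (hc j) (sq_nonneg _)

theorem dotProduct_mulVec_le_mul_dotProduct_self (hH : H.IsHermitian) {c : ℝ}
    (hc : ∀ j, hH.eigenvalues j ≤ c) (v : ι → ℝ) : v ⬝ᵥ H *ᵥ v ≤ c * (v ⬝ᵥ v) := by
  rw [hH.dotProduct_mulVec_eq_sum, dotProduct_self_eq_sum_sq_star_mulVec
    hH.eigenvectorUnitary.2, Finset.mul_sum]
  exact Finset.sum_le_sum fun j _ => mul_le_mul_of_nonneg_right (hc j) (sq_nonneg _)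

end IsHermitian

end Matrix

section vnorm

variable {n : ℕ}

theorem vnorm_nonneg (x : Fin n → ℝ) : 0 ≤ vnorm x := Real.sqrt_nonneg _

theorem vnorm_sq (x : Fin n → ℝ) : vnorm x ^ 2 = x ⬝ᵥ x := by
  rw [vnorm, Real.sq_sqrt (by positivity)]
  simp only [dotProduct, sq]

theorem vnorm_pos {x : Fin n → ℝ} (hx : x ≠ 0) : 0 < vnorm x := by
  obtain ⟨j, hj⟩ := Function.ne_iff.1 hx
  exact Real.sqrt_pos.2 <|
    Finset.sum_pos' (fun i _ => sq_nonneg _) ⟨j, Finset.mem_univ j, pow_two_pos_of_ne_zero hj⟩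

theorem vnorm_le_vnorm_of_abs_le {x y : Fin n → ℝ} (h : ∀ i, |x i| ≤ |y i|) :
    vnorm x ≤ vnorm y :=
  Real.sqrt_le_sqrt (Finset.sum_le_sum fun i _ => sq_le_sq.2 (h i))

end vnorm

section sv

variable {m n : ℕ} (A : Matrix (Fin m) (Fin n) ℝ)

theorem sqrt_eigenvalues_mem_insertionSort (j : Fin n) :
    √((isHermitian_conjTranspose_mul_self A).eigenvalues j) ∈
      (List.ofFn fun j : Fin n =>
        √((isHermitian_conjTranspose_mul_self A).eigenvalues j)).insertionSort (· ≥ ·) :=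
  (List.perm_insertionSort _ _).mem_iff.2 (List.mem_ofFn.2 ⟨j, rfl⟩)

theorem sv_nonneg (i : ℕ) : 0 ≤ sv A i := by
  rcases List.getD_mem_or_eq_default ((List.ofFn fun j : Fin n =>
      √((isHermitian_conjTranspose_mul_self A).eigenvalues j)).insertionSort (· ≥ ·)) i 0
    with hmem | hzero
  · obtain ⟨j, hj⟩ := List.mem_ofFn.1 ((List.perm_insertionSort _ _).mem_iff.1 hmem)
    rw [sv, ← hj]
    exact Real.sqrt_nonneg _
  · rw [sv, hzero]

theorem sv_sub_one_le_sqrt_eigenvalues (j : Fin n) :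
    sv A (n - 1) ≤ √((isHermitian_conjTranspose_mul_self A).eigenvalues j) := by
  have := (List.pairwise_insertionSort _ _).getD_length_sub_one_le
    (sqrt_eigenvalues_mem_insertionSort A j) 0
  rwa [List.length_insertionSort, List.length_ofFn] at this

theorem sqrt_eigenvalues_le_sv_zero (j : Fin n) :
    √((isHermitian_conjTranspose_mul_self A).eigenvalues j) ≤ sv A 0 :=
  (List.pairwise_insertionSort _ _).le_getD_zero (sqrt_eigenvalues_mem_insertionSort A j) 0

theorem sv_sub_one_mul_vnorm_le (v : Fin n → ℝ) : sv A (n - 1) * vnorm v ≤ vnorm (A *ᵥ v) := by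
  refine (pow_le_pow_iff_left₀ (mul_nonneg (sv_nonneg A _) (vnorm_nonneg v)) (vnorm_nonneg _)
    two_ne_zero).1 ?_
  rw [mul_pow, vnorm_sq, vnorm_sq, ← dotProduct_conjTranspose_mul_self_mulVec]
  refine (isHermitian_conjTranspose_mul_self A).mul_dotProduct_self_le_dotProduct_mulVec
    (fun j => ?_) v
  rw [← Real.sq_sqrt (eigenvalues_conjTranspose_mul_self_nonneg A j)]
  exact pow_le_pow_left₀ (sv_nonneg A _) (sv_sub_one_le_sqrt_eigenvalues A j) 2

theorem vnorm_mulVec_le_sv_zero_mul (v : Fin n → ℝ) : vnorm (A *ᵥ v) ≤ sv A 0 * vnorm v := by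
  refine (pow_le_pow_iff_left₀ (vnorm_nonneg _) (mul_nonneg (sv_nonneg A _) (vnorm_nonneg v))
    two_ne_zero).1 ?_
  rw [mul_pow, vnorm_sq, vnorm_sq, ← dotProduct_conjTranspose_mul_self_mulVec]
  refine (isHermitian_conjTranspose_mul_self A).dotProduct_mulVec_le_mul_dotProduct_self
    (fun j => ?_) v
  rw [← Real.sq_sqrt (eigenvalues_conjTranspose_mul_self_nonneg A j)]
  exact pow_le_pow_left₀ (Real.sqrt_nonneg _) (sqrt_eigenvalues_le_sv_zero A j) 2

end sv

theorem eq_zero_of_mulVec_eq_mulVec_of_abs_le {m n : ℕ} {A B : Matrix (Fin m) (Fin n) ℝ}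
    (h : sv B 0 < sv A (n - 1)) {d u : Fin n → ℝ} (hdu : A *ᵥ d = B *ᵥ u)
    (habs : ∀ i, |u i| ≤ |d i|) : d = 0 := by
  by_contra hd
  have hd_pos := vnorm_pos hd
  have : sv A (n - 1) * vnorm d ≤ sv B 0 * vnorm d :=
    calc sv A (n - 1) * vnorm d ≤ vnorm (A *ᵥ d) := sv_sub_one_mul_vnorm_le A d
      _ = vnorm (B *ᵥ u) := by rw [hdu]
      _ ≤ sv B 0 * vnorm u := vnorm_mulVec_le_sv_zero_mul B u
      _ ≤ sv B 0 * vnorm d := by gcongr; exacts [sv_nonneg B 0, vnorm_le_vnorm_of_abs_le habs]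
  exact (le_of_mul_le_mul_right this hd_pos).not_gt h

theorem gave_unique_of_sv_general {m n : ℕ} (A B : Matrix (Fin m) (Fin n) ℝ)
    (M : Matrix (Fin m) (Fin m) ℝ)
    (h : sv (M * A) (n - 1) > sv (M * B) 0) (b : Fin m → ℝ)
    (hex : ∃ x : Fin n → ℝ, A.mulVec x - B.mulVec (fun j => |x j|) = b) :
    ∃! x : Fin n → ℝ, A.mulVec x - B.mulVec (fun j => |x j|) = b := by
  obtain ⟨x, hx⟩ := hex
  refine ⟨x, hx, fun y hy => ?_⟩
  have hAB : A *ᵥ (y - x) = B *ᵥ fun j => |y j| - |x j| := by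
    rw [mulVec_sub, show (fun j => |y j| - |x j|) = (fun j => |y j|) - fun j => |x j| from rfl,
      mulVec_sub]
    linear_combination (norm := abel) hy.trans hx.symm
  have hMAB : (M * A) *ᵥ (y - x) = (M * B) *ᵥ fun j => |y j| - |x j| := by
    rw [← mulVec_mulVec, ← mulVec_mulVec, hAB]
  exact sub_eq_zero.1 <| eq_zero_of_mulVec_eq_mulVec_of_abs_le h hMAB
    fun i => abs_abs_sub_abs_le_abs_sub (y i) (x i)

/-- If `m ≥ n` and there is a nonsingular `M ∈ ℝ^{m×m}` with `σ_n(M A) > ‖M B‖₂`, then a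
solution of `A x − B|x| = b`, if one exists, is unique. -/
theorem gave_unique_of_sv {m n : ℕ} (hmn : n ≤ m) (A B : Matrix (Fin m) (Fin n) ℝ)
    (M : Matrix (Fin m) (Fin m) ℝ) (hM : IsUnit M)
    (h : sv (M * A) (n - 1) > sv (M * B) 0) (b : Fin m → ℝ)
    (hex : ∃ x : Fin n → ℝ, A.mulVec x - B.mulVec (fun j => |x j|) = b) :
    ∃! x : Fin n → ℝ, A.mulVec x - B.mulVec (fun j => |x j|) = b :=
  gave_unique_of_sv_general A B M h b hex
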